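/- Assume a ∈ [2π/5, π/2). For every ρ ∈ ℂ with ρ ≠ 0, setting λ = ρ², one has for all x ∈ [2a, π]: Y(x,λ) = Y₀(x,λ) + Y₁(x,λ) + Y₂(x,λ), where Y₀(x,λ) = sin(ρx)/ρ, Y₁(x,λ) = −(cos ρ(x−a))/(2ρ²) ∫_a^x q(t) dt + (1/(2ρ²)) ∫_a^x q(t) cos ρ(x−2t+a) dt, and Y₂(x,λ) = ∫_{2a}^x (sin ρ(x−t)/ρ) q(t) Y₁(t−a,λ) dt. -/

import Mathlib

/-!
Variation of constants turns the delay equation into the Volterra equation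
`Y x = sin (ρ x) / ρ + ∫ t in a..x, sin (ρ (x - t)) / ρ * q t * Y (t - a)`, whose integral may
start at `a` because `q` vanishes on `[0, a]`. Since the unknown enters only through `Y (t - a)`,
it is solved by steps: on `[0, a]` the integral vanishes, so `Y = Y₀`; on `[a, 2a]` substituting
`Y (t - a) = Y₀ (t - a)` and the product-to-sum formula give `Y₁`; on `[2a, π] ⊆ [2a, 3a]` the
remainder `Y (t - a) - Y₀ (t - a)` vanishes for `t ≤ 2a` and equals `Y₁ (t - a)` afterwards,
which gives `Y₂`.
-/

open Real Set MeasureTheory intervalIntegral Filter Asymptotics Topology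

noncomputable section

/-- `y` is a (strong) solution of the delay equation `-y''(x) + q(x) y(x - a) = λ y(x)`
on `(0, π)` (equivalently `y'' = q(x) y(x - a) - λ y`), differentiable on `[0, π]` with
continuous derivative there, and with initial conditions `y(0) = 0`, `y'(0) = 1`. -/
def IsSolution (a : ℝ) (q : ℝ → ℂ) (lam : ℂ) (y : ℝ → ℂ) : Prop :=
  (∀ x ∈ Icc (0:ℝ) π, HasDerivAt y (deriv y x) x) ∧
  (∀ x ∈ Ioo (0:ℝ) π, HasDerivAt (deriv y) (q x * y (x - a) - lam * y x) x) ∧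
  ContinuousOn (deriv y) (Icc 0 π) ∧
  y 0 = 0 ∧ deriv y 0 = 1

/-- The term `Y₁(x, λ)`, where `λ = ρ²`. -/
def Y1 (a : ℝ) (q : ℝ → ℂ) (ρ : ℂ) (x : ℝ) : ℂ :=
  -(Complex.cos (ρ * (x - a)) / (2 * ρ ^ 2)) * (∫ t in a..x, q t)
    + (1 / (2 * ρ ^ 2)) * ∫ t in a..x, q t * Complex.cos (ρ * (x - 2 * t + a))

/-- The term `Y₂(x, λ)`, where `λ = ρ²`. -/
def Y2 (a : ℝ) (q : ℝ → ℂ) (ρ : ℂ) (x : ℝ) : ℂ :=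
  ∫ t in (2 * a)..x, (Complex.sin (ρ * (x - t)) / ρ) * q t * Y1 a q ρ (t - a)

theorem hasDerivAt_sin_mul_sub (ρ : ℂ) (x u : ℝ) :
    HasDerivAt (fun u : ℝ => Complex.sin (ρ * (x - u))) (-ρ * Complex.cos (ρ * (x - u))) u := by
  have h := ((hasDerivAt_id (u : ℂ)).const_sub (x : ℂ)).const_mul ρ |>.csin
  exact h.comp_ofReal.congr_deriv (by simp; ring)

theorem hasDerivAt_cos_mul_sub (ρ : ℂ) (x u : ℝ) :
    HasDerivAt (fun u : ℝ => Complex.cos (ρ * (x - u))) (ρ * Complex.sin (ρ * (x - u))) u := by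
  have h := ((hasDerivAt_id (u : ℂ)).const_sub (x : ℂ)).const_mul ρ |>.ccos
  exact h.comp_ofReal.congr_deriv (by simp; ring)

theorem eq_sin_div_add_integral_of_hasDerivAt {y y' g : ℝ → ℂ} {ρ : ℂ} {b : ℝ} (hρ : ρ ≠ 0)
    (hy : ∀ x ∈ Icc 0 b, HasDerivAt y (y' x) x)
    (hy' : ∀ x ∈ Ioo 0 b, HasDerivAt y' (g x - ρ ^ 2 * y x) x)
    (hy'c : ContinuousOn y' (Icc 0 b)) (hg : IntervalIntegrable g volume 0 b)
    (h0 : y 0 = 0) (h1 : y' 0 = 1) {x : ℝ} (hx : x ∈ Icc 0 b) :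
    y x = Complex.sin (ρ * x) / ρ + ∫ t in (0:ℝ)..x, Complex.sin (ρ * (x - t)) / ρ * g t := by
  set F : ℝ → ℂ := fun u =>
    y' u * (Complex.sin (ρ * (x - u)) / ρ) + y u * Complex.cos (ρ * (x - u))
  have hsub : Icc 0 x ⊆ Icc 0 b := Icc_subset_Icc_right hx.2
  have hyc : ContinuousOn y (Icc 0 b) := fun u hu => (hy u hu).continuousAt.continuousWithinAt
  have hFc : ContinuousOn F (Icc 0 x) :=
    ((hy'c.mono hsub).mul (by fun_prop)).add ((hyc.mono hsub).mul (by fun_prop))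
  have hF : ∀ u ∈ Ioo 0 x, HasDerivAt F (Complex.sin (ρ * (x - u)) / ρ * g u) u := by
    intro u hu
    have hub : u ∈ Ioo 0 b := ⟨hu.1, hu.2.trans_le hx.2⟩
    refine (((hy' u hub).mul ((hasDerivAt_sin_mul_sub ρ x u).div_const ρ)).add
      ((hy u (Ioo_subset_Icc_self hub)).mul (hasDerivAt_cos_mul_sub ρ x u))).congr_deriv ?_
    field_simp
    ring
  have hKg : IntervalIntegrable (fun u => Complex.sin (ρ * (x - u)) / ρ * g u) volume 0 x :=
    (hg.mono_set (by simpa [uIcc_of_le hx.1, uIcc_of_le (hx.1.trans hx.2)] using hsub))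
      |>.continuousOn_mul (by fun_prop)
  rw [integral_eq_sub_of_hasDerivAt_of_le hx.1 hFc hF hKg]
  simp [F, h0, h1]

theorem intervalIntegral.integral_eq_integral_of_eqOn_zero {F : ℝ → ℂ} {c d x : ℝ}
    (hF : EqOn F 0 (uIcc c d)) (hx : IntervalIntegrable F volume d x) :
    ∫ t in c..x, F t = ∫ t in d..x, F t := by
  have hcd : IntervalIntegrable F volume c d :=
    IntervalIntegrable.zero.congr (fun t ht => (hF (uIoc_subset_uIcc ht)).symm)
  rw [← integral_add_adjacent_intervals hcd hx, integral_congr hF]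
  simp

theorem Y1_eq_integral_sin_mul_sin {a x : ℝ} {q : ℝ → ℂ} {ρ : ℂ} (hρ : ρ ≠ 0)
    (hq : IntervalIntegrable q volume a x) :
    Y1 a q ρ x = ∫ t in a..x,
      Complex.sin (ρ * (x - t)) / ρ * (q t * (Complex.sin (ρ * (t - a)) / ρ)) := by
  have hq' : IntervalIntegrable (fun t => q t * Complex.cos (ρ * (x - 2 * t + a))) volume a x :=
    hq.mul_continuousOn (by fun_prop)
  have hprod : ∀ t : ℝ, Complex.sin (ρ * (x - t)) / ρ * (q t * (Complex.sin (ρ * (t - a)) / ρ))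
      = -(Complex.cos (ρ * (x - a)) / (2 * ρ ^ 2)) * q t
        + 1 / (2 * ρ ^ 2) * (q t * Complex.cos (ρ * (x - 2 * t + a))) := by
    intro t
    have e1 : ρ * ((x:ℂ) - a) = ρ * (x - t) + ρ * (t - a) := by ring
    have e2 : ρ * ((x:ℂ) - 2 * t + a) = ρ * (x - t) - ρ * (t - a) := by ring
    rw [e1, e2, Complex.cos_add, Complex.cos_sub]
    field_simp
    ring
  simp only [hprod]
  rw [integral_add (hq.const_mul _) (hq'.const_mul _), intervalIntegral.integral_const_mul,
    intervalIntegral.integral_const_mul, Y1]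

theorem IntervalIntegrable.sin_div_mul_mul {q w : ℝ → ℂ} {a b c d : ℝ}
    (hq : IntervalIntegrable q volume a b) (hw : ContinuousOn w (uIcc a b)) (ρ : ℂ) (x : ℝ)
    (hc : c ∈ uIcc a b) (hd : d ∈ uIcc a b) :
    IntervalIntegrable (fun t => Complex.sin (ρ * (x - t)) / ρ * (q t * w t)) volume c d :=
  ((hq.mul_continuousOn hw).continuousOn_mul (by fun_prop)).mono_set (uIcc_subset_uIcc hc hd)

namespace IsSolution

variable {a : ℝ} {q : ℝ → ℂ} {ρ lam : ℂ} {Y : ℝ → ℂ}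

theorem continuousOn (hY : IsSolution a q lam Y) : ContinuousOn Y (Icc 0 π) :=
  fun u hu => (hY.1 u hu).continuousAt.continuousWithinAt

theorem continuousOn_comp_sub (ha : 0 ≤ a) (hY : IsSolution a q lam Y) :
    ContinuousOn (fun t => Y (t - a)) (Icc a π) :=
  hY.continuousOn.comp (continuous_sub_right a).continuousOn
    fun t ht => ⟨by linarith [ht.1], by linarith [ht.2]⟩

theorem continuousOn_comp_sub_sub_sin_div (ha : 0 ≤ a) (haπ : a ≤ π)
    (hY : IsSolution a q lam Y) :
    ContinuousOn (fun t => Y (t - a) - Complex.sin (ρ * (t - a)) / ρ) (uIcc a π) := by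
  rw [uIcc_of_le haπ]
  exact (hY.continuousOn_comp_sub ha).sub (by fun_prop)

theorem intervalIntegrable_mul_comp_sub (ha : 0 ≤ a) (haπ : a ≤ π)
    (hq : IntervalIntegrable q volume a π) (hq0 : ∀ x ∈ Icc 0 a, q x = 0)
    (hY : IsSolution a q lam Y) :
    IntervalIntegrable (fun t => q t * Y (t - a)) volume 0 π := by
  have h0a : IntervalIntegrable (fun t => q t * Y (t - a)) volume 0 a :=
    IntervalIntegrable.zero.congr fun t ht => by
      rw [uIoc_of_le ha] at ht
      simp [hq0 t (Ioc_subset_Icc_self ht)]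
  exact h0a.trans (hq.mul_continuousOn (by rw [uIcc_of_le haπ]; exact hY.continuousOn_comp_sub ha))

theorem eq_sin_div_add_integral (ha : 0 ≤ a) (haπ : a ≤ π)
    (hq : IntervalIntegrable q volume a π) (hq0 : ∀ x ∈ Icc 0 a, q x = 0) (hρ : ρ ≠ 0)
    (hY : IsSolution a q (ρ ^ 2) Y) {x : ℝ} (hx : x ∈ Icc 0 π) :
    Y x = Complex.sin (ρ * x) / ρ
      + ∫ t in a..x, Complex.sin (ρ * (x - t)) / ρ * (q t * Y (t - a)) := by
  have hg := hY.intervalIntegrable_mul_comp_sub ha haπ hq hq0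
  rw [eq_sin_div_add_integral_of_hasDerivAt (g := fun t => q t * Y (t - a)) hρ hY.1 hY.2.1
    hY.2.2.1 hg hY.2.2.2.1 hY.2.2.2.2 hx]
  congr 1
  refine integral_eq_integral_of_eqOn_zero (fun t ht => ?_)
    ((hg.mono_set (uIcc_subset_uIcc ?_ ?_)).continuousOn_mul (by fun_prop))
  · rw [uIcc_of_le ha] at ht
    simp [hq0 t ht]
  · rw [uIcc_of_le pi_pos.le]; exact ⟨ha, haπ⟩
  · rwa [uIcc_of_le pi_pos.le]

theorem eq_sin_div (ha : 0 ≤ a) (haπ : a ≤ π)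
    (hq : IntervalIntegrable q volume a π) (hq0 : ∀ x ∈ Icc 0 a, q x = 0) (hρ : ρ ≠ 0)
    (hY : IsSolution a q (ρ ^ 2) Y) {x : ℝ} (hx : x ∈ Icc 0 a) :
    Y x = Complex.sin (ρ * x) / ρ := by
  rw [hY.eq_sin_div_add_integral ha haπ hq hq0 hρ ⟨hx.1, hx.2.trans haπ⟩, add_eq_left,
    integral_congr (g := fun _ => 0) fun t ht => ?_]
  · simp
  rw [uIcc_of_ge hx.2] at ht
  simp [hq0 t ⟨hx.1.trans ht.1, ht.2⟩]

theorem eq_sin_div_add_Y1 (ha : 0 ≤ a)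
    (hq : IntervalIntegrable q volume a π) (hq0 : ∀ x ∈ Icc 0 a, q x = 0) (hρ : ρ ≠ 0)
    (hY : IsSolution a q (ρ ^ 2) Y) {x : ℝ} (hx : x ∈ Icc a (2 * a)) (hxπ : x ≤ π) :
    Y x = Complex.sin (ρ * x) / ρ + Y1 a q ρ x := by
  have haπ : a ≤ π := hx.1.trans hxπ
  rw [hY.eq_sin_div_add_integral ha haπ hq hq0 hρ ⟨ha.trans hx.1, hxπ⟩,
    Y1_eq_integral_sin_mul_sin hρ (hq.mono_set (uIcc_subset_uIcc_left ?_))]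
  · congr 1
    refine integral_congr fun t ht => ?_
    rw [uIcc_of_le hx.1] at ht
    rw [hY.eq_sin_div ha haπ hq hq0 hρ ⟨by linarith [ht.1], by linarith [ht.2, hx.2]⟩]
    push_cast
    rfl
  · rw [uIcc_of_le haπ]; exact ⟨hx.1, hxπ⟩

theorem integral_sub_sin_div_eq_Y2 (ha : 0 ≤ a)
    (hq : IntervalIntegrable q volume a π) (hq0 : ∀ x ∈ Icc 0 a, q x = 0) (hρ : ρ ≠ 0)
    (hY : IsSolution a q (ρ ^ 2) Y) {x : ℝ} (hx : x ∈ Icc (2 * a) π) (hx3 : x ≤ 3 * a) :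
    ∫ t in a..x, Complex.sin (ρ * (x - t)) / ρ
      * (q t * (Y (t - a) - Complex.sin (ρ * (t - a)) / ρ)) = Y2 a q ρ x := by
  have haπ : a ≤ π := by linarith [hx.1.trans hx.2]
  have hmem : ∀ {t}, t ∈ Icc a π → t ∈ uIcc a π := fun ht => by rwa [uIcc_of_le haπ]
  rw [integral_eq_integral_of_eqOn_zero (d := 2 * a) (fun t ht => ?_)
    (hq.sin_div_mul_mul (hY.continuousOn_comp_sub_sub_sin_div ha haπ) ρ x
      (hmem ⟨by linarith, hx.1.trans hx.2⟩) (hmem ⟨by linarith [hx.1], hx.2⟩)), Y2]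
  · refine integral_congr fun t ht => ?_
    rw [uIcc_of_le hx.1] at ht
    rw [hY.eq_sin_div_add_Y1 ha hq hq0 hρ ⟨by linarith [ht.1], by linarith [ht.2]⟩
      (by linarith [ht.2, hx.2])]
    push_cast
    ring
  · rw [uIcc_of_le (by linarith)] at ht
    rw [hY.eq_sin_div ha haπ hq hq0 hρ ⟨by linarith [ht.1], by linarith [ht.2]⟩]
    push_cast
    simp

end IsSolution

theorem solution_on_third_interval_general
    (a : ℝ) (ha1 : 2 * π / 5 ≤ a)
    (q : ℝ → ℂ) (hq_int : IntegrableOn q (Ioc a π))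
    (hq0 : ∀ x ∈ Icc (0:ℝ) a, q x = 0)
    (ρ : ℂ) (hρ : ρ ≠ 0) (Y : ℝ → ℂ) (hY : IsSolution a q (ρ ^ 2) Y) :
    ∀ x ∈ Icc (2 * a) π,
      Y x = Complex.sin (ρ * x) / ρ + Y1 a q ρ x + Y2 a q ρ x := by
  intro x hx
  have ha : 0 ≤ a := by linarith [pi_pos]
  have haπ : a ≤ π := by linarith [hx.1.trans hx.2]
  have hq : IntervalIntegrable q volume a π :=
    (intervalIntegrable_iff_integrableOn_Ioc_of_le haπ).2 hq_int
  have hx' : x ∈ uIcc a π := by rw [uIcc_of_le haπ]; exact ⟨by linarith [hx.1], hx.2⟩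
  have hY0 : ContinuousOn (fun t : ℝ => Complex.sin (ρ * (t - a)) / ρ) (uIcc a π) := by fun_prop
  rw [hY.eq_sin_div_add_integral ha haπ hq hq0 hρ ⟨by linarith [hx.1], hx.2⟩, add_assoc,
    ← hY.integral_sub_sin_div_eq_Y2 ha hq hq0 hρ hx (by linarith [hx.2]),
    Y1_eq_integral_sin_mul_sin hρ (hq.mono_set (uIcc_subset_uIcc_left hx')),
    ← integral_add (hq.sin_div_mul_mul hY0 ρ x left_mem_uIcc hx')
      (hq.sin_div_mul_mul (hY.continuousOn_comp_sub_sub_sin_div ha haπ) ρ x left_mem_uIcc hx')]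
  congr 1
  refine integral_congr fun t _ => ?_
  ring

/-- For `a ∈ [2π/5, π/2)`, `ρ ≠ 0`, `λ = ρ²`, one has
`Y(x, λ) = Y₀(x, λ) + Y₁(x, λ) + Y₂(x, λ)` for `x ∈ [2a, π]`, with `Y₀(x, λ) = sin(ρx)/ρ`. -/
theorem solution_on_third_interval
    (a : ℝ) (ha1 : 2 * π / 5 ≤ a) (ha2 : a < π / 2)
    (q : ℝ → ℂ) (hq_int : IntegrableOn q (Ioc a π))
    (hq0 : ∀ x ∈ Icc (0:ℝ) a, q x = 0)
    (ρ : ℂ) (hρ : ρ ≠ 0) (Y : ℝ → ℂ) (hY : IsSolution a q (ρ ^ 2) Y)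
    (hYuniq : ∀ y : ℝ → ℂ, IsSolution a q (ρ ^ 2) y → EqOn y Y (Icc 0 π)) :
    ∀ x ∈ Icc (2 * a) π,
      Y x = Complex.sin (ρ * x) / ρ + Y1 a q ρ x + Y2 a q ρ x :=
  solution_on_third_interval_general a ha1 q hq_int hq0 ρ hρ Y hY
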